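/- Let n ≥ 1 be an integer, s ∈ (0,1), let Ω ⊂ ℝⁿ be a bounded open set, let U ⊆ Ω be measurable, and let V : U → [0,∞) be measurable. Let w : ℝⁿ → ℝ be measurable with [w]_s² < ∞ and w ≤ 0 a.e. on ℝⁿ∖U, and suppose that ∫_U V·w·w⁺ dx converges and E_s(w, w⁺) + ∫_U V·w·w⁺ dx ≤ 0. Then w ≤ 0 almost everywhere on ℝⁿ. -/
import Mathlib

open Real Set MeasureTheory

private lemma aux_key (a b : ℝ) :
    (max a 0 - max b 0) ^ 2 ≤ (a - b) * (max a 0 - max b 0) := by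
  rcases le_total a 0 with ha | ha <;> rcases le_total b 0 with hb | hb
  · simp [max_eq_right ha, max_eq_right hb]
  · rw [max_eq_right ha, max_eq_left hb]; nlinarith
  · rw [max_eq_left ha, max_eq_right hb]; nlinarith
  · rw [max_eq_left ha, max_eq_left hb, sq]

private lemma aux_key2 (a b : ℝ) :
    (a - b) * (max a 0 - max b 0) ≤ (a - b) ^ 2 := by
  have h1 : |max a 0 - max b 0| ≤ |a - b| := abs_max_sub_max_le_abs a b 0
  calc (a-b) * (max a 0 - max b 0) ≤ |(a-b) * (max a 0 - max b 0)| := le_abs_self _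
    _ = |a-b| * |max a 0 - max b 0| := abs_mul _ _
    _ ≤ |a-b| * |a-b| := mul_le_mul_of_nonneg_left h1 (abs_nonneg _)
    _ = (a-b)^2 := by rw [abs_mul_abs_self, ← sq]

private lemma aux_div_mono {x y d : ℝ} (hd : 0 ≤ d) (hxy : x ≤ y) : x / d ≤ y / d := by
  rcases eq_or_lt_of_le hd with h | h
  · simp [← h]
  · exact (div_le_div_iff_of_pos_right h).2 hxy

/-- Comparison principle with a nonnegative zero-order coefficient `V`
(Theorem 4.9): if `w ≤ 0` a.e. outside `U`, `[w]_s² < ∞` and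
`E_s(w, w⁺) + ∫_U V w w⁺ ≤ 0`, then `w ≤ 0` a.e. on `ℝⁿ`. -/
theorem comparison_principle_with_potential
    (n : ℕ) (hn : 1 ≤ n) (s : ℝ) (hs : s ∈ Set.Ioo (0 : ℝ) 1)
    (Ω : Set (EuclideanSpace ℝ (Fin n))) (hΩo : IsOpen Ω)
    (hΩb : Bornology.IsBounded Ω)
    (U : Set (EuclideanSpace ℝ (Fin n))) (hU : U ⊆ Ω)
    (hUmeas : MeasurableSet U)
    (V : EuclideanSpace ℝ (Fin n) → ℝ) (hVmeas : Measurable V)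
    (hVnonneg : ∀ x ∈ U, 0 ≤ V x)
    (w : EuclideanSpace ℝ (Fin n) → ℝ) (hwmeas : Measurable w)
    (hwfin : MeasureTheory.Integrable
      (fun p : EuclideanSpace ℝ (Fin n) × EuclideanSpace ℝ (Fin n) =>
        (w p.1 - w p.2) ^ 2 / ‖p.1 - p.2‖ ^ ((n : ℝ) + 2 * s)) volume)
    (hwout : ∀ᵐ x ∂(volume : Measure (EuclideanSpace ℝ (Fin n))),
      x ∉ U → w x ≤ 0)
    (hVint : MeasureTheory.IntegrableOn
      (fun x => V x * w x * max (w x) 0) U volume)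
    (hineq : (∫ p : EuclideanSpace ℝ (Fin n) × EuclideanSpace ℝ (Fin n),
        (w p.1 - w p.2) * (max (w p.1) 0 - max (w p.2) 0) /
          ‖p.1 - p.2‖ ^ ((n : ℝ) + 2 * s)) +
      (∫ x in U, V x * w x * max (w x) 0 ∂volume) ≤ 0) :
    ∀ᵐ x ∂(volume : Measure (EuclideanSpace ℝ (Fin n))), w x ≤ 0 := by
  classical
  haveI : Nonempty (Fin n) := ⟨⟨0, hn⟩⟩
  have hKnn : ∀ p : EuclideanSpace ℝ (Fin n) × EuclideanSpace ℝ (Fin n),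
      (0:ℝ) ≤ ‖p.1 - p.2‖ ^ ((n : ℝ) + 2 * s) :=
    fun p => Real.rpow_nonneg (norm_nonneg _) _
  set g : EuclideanSpace ℝ (Fin n) × EuclideanSpace ℝ (Fin n) → ℝ :=
    fun p => (w p.1 - w p.2) * (max (w p.1) 0 - max (w p.2) 0) /
      ‖p.1 - p.2‖ ^ ((n : ℝ) + 2 * s) with hgdef
  set f : EuclideanSpace ℝ (Fin n) × EuclideanSpace ℝ (Fin n) → ℝ :=
    fun p => (max (w p.1) 0 - max (w p.2) 0) ^ 2 /
      ‖p.1 - p.2‖ ^ ((n : ℝ) + 2 * s) with hfdef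
  have hhnn : ∀ p : EuclideanSpace ℝ (Fin n) × EuclideanSpace ℝ (Fin n),
      (0:ℝ) ≤ (w p.1 - w p.2) ^ 2 / ‖p.1 - p.2‖ ^ ((n : ℝ) + 2 * s) :=
    fun p => div_nonneg (sq_nonneg _) (hKnn p)
  have hfmeas : Measurable f := by unfold f; fun_prop
  have hgmeas : Measurable g := by unfold g; fun_prop
  have hfnn : ∀ p, 0 ≤ f p := fun p => div_nonneg (sq_nonneg _) (hKnn p)
  have hfg : ∀ p, f p ≤ g p := fun p =>
    aux_div_mono (hKnn p) (aux_key (w p.1) (w p.2))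
  have hgh : ∀ p, g p ≤ (w p.1 - w p.2) ^ 2 / ‖p.1 - p.2‖ ^ ((n : ℝ) + 2 * s) :=
    fun p => aux_div_mono (hKnn p) (aux_key2 (w p.1) (w p.2))
  have hfh : ∀ p, f p ≤ (w p.1 - w p.2) ^ 2 / ‖p.1 - p.2‖ ^ ((n : ℝ) + 2 * s) :=
    fun p => le_trans (hfg p) (hgh p)
  have hfint : Integrable f volume := by
    refine hwfin.mono hfmeas.aestronglyMeasurable (ae_of_all _ fun p => ?_)
    rw [Real.norm_of_nonneg (hfnn p), Real.norm_of_nonneg (hhnn p)]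
    exact hfh p
  have hgint : Integrable g volume := by
    refine hwfin.mono hgmeas.aestronglyMeasurable (ae_of_all _ fun p => ?_)
    rw [Real.norm_of_nonneg (hhnn p), Real.norm_eq_abs, abs_le]
    refine ⟨?_, hgh p⟩
    calc -((w p.1 - w p.2) ^ 2 / ‖p.1 - p.2‖ ^ ((n : ℝ) + 2 * s)) ≤ 0 :=
          neg_nonpos_of_nonneg (hhnn p)
      _ ≤ f p := hfnn p
      _ ≤ g p := hfg p
  have hVterm : 0 ≤ ∫ x in U, V x * w x * max (w x) 0 ∂volume := by
    refine setIntegral_nonneg hUmeas fun x hx => ?_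
    have h1 : 0 ≤ w x * max (w x) 0 := by
      rcases le_total (w x) 0 with hw | hw
      · simp [max_eq_right hw]
      · simpa [max_eq_left hw] using mul_self_nonneg (w x)
    rw [mul_assoc]
    exact mul_nonneg (hVnonneg x hx) h1
  have hgle : ∫ p, g p ≤ 0 := by
    rw [hgdef]; linarith
  have hfle : ∫ p, f p ≤ 0 :=
    le_trans (integral_mono hfint hgint hfg) hgle
  have hfeq : ∫ p, f p = 0 :=
    le_antisymm hfle (integral_nonneg hfnn)
  have hf0 : ∀ᵐ p : EuclideanSpace ℝ (Fin n) × EuclideanSpace ℝ (Fin n) ∂volume,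
      f p = 0 := by
    have := (integral_eq_zero_iff_of_nonneg (fun p => hfnn p) hfint).1 hfeq
    filter_upwards [this] with p hp using hp
  rw [Measure.volume_eq_prod] at hf0
  have hiter : ∀ᵐ x : EuclideanSpace ℝ (Fin n) ∂volume,
      ∀ᵐ y : EuclideanSpace ℝ (Fin n) ∂volume, f (x, y) = 0 :=
    Measure.ae_ae_of_ae_prod hf0
  have hUc : (volume : Measure (EuclideanSpace ℝ (Fin n))) Uᶜ ≠ 0 := by
    intro h0
    have hfin : (volume : Measure (EuclideanSpace ℝ (Fin n))) U < ⊤ :=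
      lt_of_le_of_lt (measure_mono hU) hΩb.measure_lt_top
    have hle : (volume : Measure (EuclideanSpace ℝ (Fin n))) univ ≤
        volume U + volume Uᶜ := by
      rw [← union_compl_self U]; exact measure_union_le _ _
    rw [h0, add_zero, measure_univ_of_isAddLeftInvariant] at hle
    exact hfin.ne (le_antisymm le_top hle)
  filter_upwards [hiter] with x hx
  have hsing : ∀ᵐ y : EuclideanSpace ℝ (Fin n) ∂volume, y ≠ x := by
    rw [ae_iff]
    have : {y : EuclideanSpace ℝ (Fin n) | ¬ y ≠ x} = {x} := by ext y; simp
    rw [this, measure_singleton]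
  have hae : ∀ᵐ y : EuclideanSpace ℝ (Fin n) ∂volume,
      (y ∉ U → w y ≤ 0) ∧ max (w y) 0 = max (w x) 0 := by
    filter_upwards [hx, hsing, hwout] with y hy hyx hyout
    refine ⟨hyout, ?_⟩
    have hKpos : (0:ℝ) < ‖x - y‖ ^ ((n : ℝ) + 2 * s) := by
      apply Real.rpow_pos_of_pos
      rw [norm_pos_iff, sub_ne_zero]
      exact fun hc => hyx hc.symm
    have hnum : (max (w x) 0 - max (w y) 0) ^ 2 = 0 := by
      rw [hfdef] at hy
      simp only at hy
      rcases div_eq_zero_iff.1 hy with h1 | h1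
      · exact h1
      · exact absurd h1 hKpos.ne'
    have h2 : max (w x) 0 - max (w y) 0 = 0 := by
      exact pow_eq_zero_iff two_ne_zero |>.1 hnum
    linarith
  obtain ⟨y, hyUc, hy1, hy2⟩ :
      ∃ y ∈ Uᶜ, (y ∉ U → w y ≤ 0) ∧ max (w y) 0 = max (w x) 0 := by
    by_contra hcon
    push_neg at hcon
    have hsub : Uᶜ ⊆ {y : EuclideanSpace ℝ (Fin n) |
        ¬ ((y ∉ U → w y ≤ 0) ∧ max (w y) 0 = max (w x) 0)} := by
      intro y hy hP
      exact (hcon y hy hP.1 hP.2).elim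
    exact hUc (measure_mono_null hsub (ae_iff.1 hae))
  have hφy : max (w y) 0 = 0 := max_eq_right (hy1 hyUc)
  have hφx : max (w x) 0 = 0 := by rw [← hy2, hφy]
  calc w x ≤ max (w x) 0 := le_max_left _ _
    _ = 0 := hφx
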